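/- arXiv:1910.04136 — 19 statements merged into one kernel-verified Lean document; each statement's English description precedes it below -/
import Mathlib

section
/- For every nonnegative integer n ≥ 1, the Cassini identity W_{n+1}·W_{n-1} − W_n² = (−q)^{n−1}·(W_2·W_0 − W_1²) holds, where multiplication is quaternion multiplication. -/
open Quaternion

section LinearRecurrence

variable {R A : Type*} [CommRing R] [Ring A] [Algebra R A]

def cassiniDefect (X : ℕ → A) (m : ℕ) : A :=
  X (m + 2) * X m - X (m + 1) ^ 2

/-- Only centrality of the scalars is needed, so this holds in any `R`-algebra: substituting the
recurrence into the left factor of `X (m + 3) * X (m + 1)` and the right factor of `X (m + 2) ^ 2`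
makes the `p`-terms cancel. -/
theorem cassiniDefect_succ {p q : R} {X : ℕ → A}
    (hX : ∀ m, X (m + 2) = p • X (m + 1) + q • X m) (m : ℕ) :
    cassiniDefect X (m + 1) = (-q) • cassiniDefect X m := by
  have h := hX (m + 1)
  calc cassiniDefect X (m + 1)
      = X (m + 3) * X (m + 1) - X (m + 2) * X (m + 2) := by
        rw [cassiniDefect, sq]
    _ = (p • X (m + 2) + q • X (m + 1)) * X (m + 1)
          - X (m + 2) * (p • X (m + 1) + q • X m) := by
        rw [← h, ← hX m]
    _ = (-q) • cassiniDefect X m := by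
        simp only [cassiniDefect, sq, add_mul, mul_add, smul_mul_assoc, mul_smul_comm]
        module

theorem cassiniDefect_eq_pow_smul {p q : R} {X : ℕ → A}
    (hX : ∀ m, X (m + 2) = p • X (m + 1) + q • X m) (m : ℕ) :
    cassiniDefect X m = (-q) ^ m • cassiniDefect X 0 := by
  induction m with
  | zero => rw [pow_zero, one_smul]
  | succ m ih => rw [cassiniDefect_succ hX, ih, smul_smul, pow_succ']

end LinearRecurrence

theorem Quaternion.recurrence_of_components {p q : ℝ} {w : ℕ → ℝ}
    (hw : ∀ n, w (n + 2) = p * w (n + 1) + q * w n) {W : ℕ → ℍ[ℝ]}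
    (hW : ∀ n, W n = ⟨w n, w (n + 1), w (n + 2), w (n + 3)⟩) (m : ℕ) :
    W (m + 2) = p • W (m + 1) + q • W m := by
  rw [hW, hW, hW]
  ext
  exacts [hw m, hw (m + 1), hw (m + 2), hw (m + 3)]

theorem stmt0 (p q : ℝ) (w : ℕ → ℝ) (hw : ∀ n, w (n + 2) = p * w (n + 1) + q * w n)
    (W : ℕ → ℍ[ℝ]) (hW : ∀ n, W n = ⟨w n, w (n + 1), w (n + 2), w (n + 3)⟩)
    (n : ℕ) (hn : 1 ≤ n) :
    W (n + 1) * W (n - 1) - (W n) ^ 2 =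
      ((-q) ^ (n - 1)) • (W 2 * W 0 - (W 1) ^ 2) := by
  obtain ⟨m, rfl⟩ : ∃ m, n = m + 1 := ⟨n - 1, (Nat.sub_add_cancel hn).symm⟩
  exact cassiniDefect_eq_pow_smul (Quaternion.recurrence_of_components hw hW) m
end

section
/- For every nonnegative integer n ≥ 1, the Cassini identity W_{n-1}·W_{n+1} − W_n² = (−q)^{n−1}·(W_0·W_2 − W_1²) holds (note the order of factors matters since quaternion multiplication is non-commutative). -/
open Quaternion

section Cassini

variable {R A : Type*} [CommRing R] [Ring A] [Algebra R A]

/-- Multiplication in `A` need not commute, so only the left factor of `x (m + 2) ^ 2` is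
expanded by the recurrence; the cross terms `p • x (m + 1) * x (m + 2)` then cancel. -/
theorem cassini_step {p q : R} {x : ℕ → A} (hx : ∀ m, x (m + 2) = p • x (m + 1) + q • x m)
    (m : ℕ) :
    x (m + 1) * x (m + 3) - x (m + 2) ^ 2 = (-q) • (x m * x (m + 2) - x (m + 1) ^ 2) := by
  have h₃ : x (m + 3) = p • x (m + 2) + q • x (m + 1) := hx (m + 1)
  calc x (m + 1) * x (m + 3) - x (m + 2) ^ 2
      = x (m + 1) * (p • x (m + 2) + q • x (m + 1))
          - (p • x (m + 1) + q • x m) * x (m + 2) := by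
        rw [h₃, sq]; nth_rewrite 2 [hx m]; rfl
    _ = (-q) • (x m * x (m + 2) - x (m + 1) ^ 2) := by
        simp only [mul_add, add_mul, mul_smul_comm, smul_mul_assoc, sq]
        module

theorem cassini {p q : R} {x : ℕ → A} (hx : ∀ m, x (m + 2) = p • x (m + 1) + q • x m) (n : ℕ) :
    x n * x (n + 2) - x (n + 1) ^ 2 = (-q) ^ n • (x 0 * x 2 - x 1 ^ 2) := by
  induction n with
  | zero => simp
  | succ n ih => rw [cassini_step hx, ih, smul_smul, ← pow_succ']

end Cassini

theorem QuaternionAlgebra.mk_add_two {R : Type*} [CommRing R] {a b c p q : R} {w : ℕ → R}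
    (hw : ∀ n, w (n + 2) = p * w (n + 1) + q * w n) (m : ℕ) :
    (⟨w (m + 2), w (m + 3), w (m + 4), w (m + 5)⟩ : ℍ[R,a,b,c]) =
      p • ⟨w (m + 1), w (m + 2), w (m + 3), w (m + 4)⟩ +
        q • ⟨w m, w (m + 1), w (m + 2), w (m + 3)⟩ := by
  ext <;> simp only [QuaternionAlgebra.re_add, QuaternionAlgebra.imI_add,
    QuaternionAlgebra.imJ_add, QuaternionAlgebra.imK_add, QuaternionAlgebra.re_smul,
    QuaternionAlgebra.imI_smul, QuaternionAlgebra.imJ_smul, QuaternionAlgebra.imK_smul, smul_eq_mul]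
  exacts [hw m, hw (m + 1), hw (m + 2), hw (m + 3)]

theorem stmt1 (p q : ℝ) (w : ℕ → ℝ) (hw : ∀ n, w (n + 2) = p * w (n + 1) + q * w n)
    (W : ℕ → ℍ[ℝ]) (hW : ∀ n, W n = ⟨w n, w (n + 1), w (n + 2), w (n + 3)⟩)
    (n : ℕ) (hn : 1 ≤ n) :
    W (n - 1) * W (n + 1) - (W n) ^ 2 =
      ((-q) ^ (n - 1)) • (W 0 * W 2 - (W 1) ^ 2) := by
  have hW_rec : ∀ m, W (m + 2) = p • W (m + 1) + q • W m := fun m => by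
    rw [hW, hW, hW]
    exact QuaternionAlgebra.mk_add_two hw m
  obtain ⟨k, rfl⟩ := Nat.exists_eq_add_of_le' hn
  simpa using cassini hW_rec k
end

section
/- For every integer n ≥ 1, W_{n+1}·W_{n−1} − W_n² = (−q)^{n−1}·(U_2·U_0 − U_1²)·(w_1² − p·w_1·w_0 − q·w_0²). -/
/-!
The Cassini defect `X (m + 2) * X m - X (m + 1) ^ 2` of any sequence obeying
`X (m + 2) = p • X (m + 1) + q • X m` in an `R`-algebra gets multiplied by `-q` at each step:
the `p`-terms cancel because `p` is central, even though the algebra (here `ℍ[ℝ]`) is not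
commutative. Every Horadam sequence is `w m = w 0 * u (m + 1) + (w 1 - p * w 0) * u m`, and
the same decomposition of quaternions expresses the defect of `W` at `0` as
`(w 1 ^ 2 - p * w 1 * w 0 - q * w 0 ^ 2)` times that of `U`.
-/

open Quaternion

section Recurrence

variable {R M : Type*} [CommRing R] [AddCommGroup M] [Module R M]

def IsSecondOrderRec (p q : R) (x : ℕ → M) : Prop :=
  ∀ n, x (n + 2) = p • x (n + 1) + q • x n

theorem IsSecondOrderRec.ext {p q : R} {x y : ℕ → M} (hx : IsSecondOrderRec p q x)
    (hy : IsSecondOrderRec p q y) (h0 : x 0 = y 0) (h1 : x 1 = y 1) : x = y := by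
  funext n
  induction n using Nat.twoStepInduction with
  | zero => exact h0
  | one => exact h1
  | more n ih0 ih1 => rw [hx, hy, ih0, ih1]

theorem IsSecondOrderRec.eq_fib_smul_add {p q : R} {u : ℕ → R} {x : ℕ → M}
    (hu : IsSecondOrderRec p q u) (hu0 : u 0 = 0) (hu1 : u 1 = 1)
    (hx : IsSecondOrderRec p q x) (m : ℕ) :
    x m = u (m + 1) • x 0 + u m • (x 1 - p • x 0) := by
  have hu2 : u 2 = p := by simpa [hu0, hu1] using hu 0
  refine congrFun (hx.ext (y := fun k ↦ u (k + 1) • x 0 + u k • (x 1 - p • x 0))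
    (fun n ↦ ?_) ?_ ?_) m
  · simp only [hu (n + 1), hu n, add_smul]
    module
  · simp [hu0, hu1]
  · simp only [hu2, hu1]
    module

end Recurrence

section Cassini

variable {R A : Type*} [CommRing R] [Ring A] [Algebra R A]

def cassini_s2 (x : ℕ → A) (m : ℕ) : A :=
  x (m + 2) * x m - x (m + 1) ^ 2

theorem IsSecondOrderRec.cassini_succ {p q : R} {x : ℕ → A} (hx : IsSecondOrderRec p q x)
    (m : ℕ) : cassini_s2 x (m + 1) = (-q) • cassini_s2 x m := by
  simp only [cassini_s2, hx (m + 1), sq]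
  nth_rewrite 3 [hx m]
  simp only [add_mul, mul_add, smul_mul_assoc, mul_smul_comm]
  module

theorem IsSecondOrderRec.cassini_eq_pow_smul {p q : R} {x : ℕ → A}
    (hx : IsSecondOrderRec p q x) (m : ℕ) : cassini_s2 x m = (-q) ^ m • cassini_s2 x 0 := by
  induction m with
  | zero => simp
  | succ m ih => rw [hx.cassini_succ, ih, smul_smul, pow_succ']

theorem IsSecondOrderRec.cassini_zero_of_eq_smul_add {p q : R} {y : ℕ → A}
    (hy : IsSecondOrderRec p q y) (α β : R) {x : ℕ → A}
    (hxy : ∀ m, x m = α • y (m + 1) + β • y m) :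
    cassini_s2 x 0 = (β ^ 2 + p * α * β - q * α ^ 2) • cassini_s2 y 0 := by
  simp only [cassini_s2, hxy, sq, hy 1, hy 0]
  simp only [add_mul, mul_add, smul_mul_assoc, mul_smul_comm, smul_add, smul_smul]
  module

end Cassini

theorem IsSecondOrderRec.quaternion {R : Type*} [CommRing R] {p q : R} {x : ℕ → R}
    (hx : IsSecondOrderRec p q x) {X : ℕ → ℍ[R]} (hX : ∀ n, X n = ⟨x n, x (n + 1), x (n + 2), x (n + 3)⟩) :
    IsSecondOrderRec p q X := by
  intro n
  rw [hX, hX, hX]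
  ext <;> exact hx _

theorem stmt2 (p q : ℝ) (w : ℕ → ℝ) (hw : ∀ n, w (n + 2) = p * w (n + 1) + q * w n)
    (W : ℕ → ℍ[ℝ]) (hW : ∀ n, W n = ⟨w n, w (n + 1), w (n + 2), w (n + 3)⟩)
    (u : ℕ → ℝ) (hu : ∀ n, u (n + 2) = p * u (n + 1) + q * u n)
    (hu0 : u 0 = 0) (hu1 : u 1 = 1)
    (U : ℕ → ℍ[ℝ]) (hU : ∀ n, U n = ⟨u n, u (n + 1), u (n + 2), u (n + 3)⟩)
    (n : ℕ) (hn : 1 ≤ n) :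
    W (n + 1) * W (n - 1) - (W n) ^ 2 =
      ((-q) ^ (n - 1) * (w 1 ^ 2 - p * w 1 * w 0 - q * w 0 ^ 2)) •
        (U 2 * U 0 - (U 1) ^ 2) := by
  have hw' : IsSecondOrderRec p q w := hw
  have hu' : IsSecondOrderRec p q u := hu
  have hwu (k : ℕ) : w k = w 0 * u (k + 1) + (w 1 - p * w 0) * u k := by
    rw [hu'.eq_fib_smul_add hu0 hu1 hw' k, smul_eq_mul, smul_eq_mul, smul_eq_mul]
    ring
  have hWU (m : ℕ) : W m = w 0 • U (m + 1) + (w 1 - p * w 0) • U m := by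
    rw [hW, hU, hU]
    ext <;> exact hwu _
  obtain ⟨m, rfl⟩ : ∃ m, n = m + 1 := ⟨n - 1, by omega⟩
  rw [Nat.add_sub_cancel]
  calc W (m + 1 + 1) * W m - W (m + 1) ^ 2
      = cassini_s2 W m := rfl
    _ = (-q) ^ m • cassini_s2 W 0 := (hw'.quaternion hW).cassini_eq_pow_smul m
    _ = _ := by
      rw [(hu'.quaternion hU).cassini_zero_of_eq_smul_add _ _ hWU, smul_smul]
      congr 1
      ring
end

section
/- For all integers m, n ≥ 1, the identity w_n·U_{m+1} + q·w_{n−1}·U_m = W_{n+m} holds, where w_n·U_{m+1} denotes scalar multiplication of the quaternion U_{m+1} by the real number w_n. -/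
open Quaternion

/-- Both sides satisfy the recurrence in `k` and agree at `k = 0, 1`. -/
theorem horadam_add_eq {R : Type*} [CommRing R] {p q : R} {w u : ℕ → R}
    (hw : ∀ n, w (n + 2) = p * w (n + 1) + q * w n)
    (hu : ∀ n, u (n + 2) = p * u (n + 1) + q * u n) (hu0 : u 0 = 0) (hu1 : u 1 = 1) (n : ℕ) :
    ∀ k, w (n + 1 + k) = w (n + 1) * u (k + 1) + q * w n * u k
  | 0 => by simp [hu0, hu1]
  | 1 => by
    have hu2 : u 2 = p := by simpa [hu0, hu1] using hu 0
    rw [hw n, hu2, hu1]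
    ring
  | k + 2 => by
    rw [show n + 1 + (k + 2) = n + 1 + k + 2 by ring, hw,
      show n + 1 + k + 1 = n + 1 + (k + 1) by ring, horadam_add_eq hw hu hu0 hu1 n (k + 1),
      horadam_add_eq hw hu hu0 hu1 n k, hu (k + 1), hu k]
    ring

theorem stmt3_general (p q : ℝ) (w : ℕ → ℝ) (hw : ∀ n, w (n + 2) = p * w (n + 1) + q * w n)
    (W : ℕ → ℍ[ℝ]) (hW : ∀ n, W n = ⟨w n, w (n + 1), w (n + 2), w (n + 3)⟩)
    (u : ℕ → ℝ) (hu : ∀ n, u (n + 2) = p * u (n + 1) + q * u n)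
    (hu0 : u 0 = 0) (hu1 : u 1 = 1)
    (U : ℕ → ℍ[ℝ]) (hU : ∀ n, U n = ⟨u n, u (n + 1), u (n + 2), u (n + 3)⟩)
    (m n : ℕ) (hn : 1 ≤ n) :
    w n • U (m + 1) + (q * w (n - 1)) • U m = W (n + m) := by
  obtain ⟨n, rfl⟩ : ∃ k, n = k + 1 := ⟨n - 1, by omega⟩
  have key := horadam_add_eq hw hu hu0 hu1 n
  rw [hW, hU, hU, Nat.add_sub_cancel]
  ext
  exacts [(key m).symm, (key (m + 1)).symm, (key (m + 2)).symm, (key (m + 3)).symm]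

theorem stmt3 (p q : ℝ) (w : ℕ → ℝ) (hw : ∀ n, w (n + 2) = p * w (n + 1) + q * w n)
    (W : ℕ → ℍ[ℝ]) (hW : ∀ n, W n = ⟨w n, w (n + 1), w (n + 2), w (n + 3)⟩)
    (u : ℕ → ℝ) (hu : ∀ n, u (n + 2) = p * u (n + 1) + q * u n)
    (hu0 : u 0 = 0) (hu1 : u 1 = 1)
    (U : ℕ → ℍ[ℝ]) (hU : ∀ n, U n = ⟨u n, u (n + 1), u (n + 2), u (n + 3)⟩)
    (m n : ℕ) (hm : 1 ≤ m) (hn : 1 ≤ n) :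
    w n • U (m + 1) + (q * w (n - 1)) • U m = W (n + m) :=
  stmt3_general p q w hw W hW u hu hu0 hu1 U hU m n hn
end

section
/- For all integers m, n ≥ 1, the identity u_n·W_{m+1} + q·u_{n−1}·W_m = W_{n+m} holds, where u_n·W_{m+1} denotes scalar multiplication of the quaternion W_{m+1} by the real number u_n. -/
open Quaternion

/- Every sequence satisfying x (n + 2) = p • x (n + 1) + q • x n, in any module, obeys the
addition formula x (k + 1 + j) = u (k + 1) • x (j + 1) + (q * u k) • x j with the (p,q)-Fibonacci
coefficients u: both sides satisfy the recurrence in k and agree for k = 0, 1. The Horadam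
quaternions form such a sequence, componentwise. -/

section Recurrence

variable {R M : Type*} [CommSemiring R] [AddCommMonoid M] [Module R M] {p q : R} {u : ℕ → R}
  {x : ℕ → M}

theorem fib_smul_add_smul_eq_of_recurrence (hu : ∀ n, u (n + 2) = p * u (n + 1) + q * u n)
    (hu0 : u 0 = 0) (hu1 : u 1 = 1) (hx : ∀ n, x (n + 2) = p • x (n + 1) + q • x n) (k j : ℕ) :
    u (k + 1) • x (j + 1) + (q * u k) • x j = x (k + 1 + j) := by
  induction k using Nat.twoStepInduction with
  | zero => simp [hu0, hu1, add_comm 1 j]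
  | one => simp [hu 0, hu0, hu1, hx j, add_comm 2 j]
  | more k ih₀ ih₁ =>
    rw [hu (k + 1), hu k, show k + 2 + 1 + j = k + 1 + j + 2 by ring, hx,
      show k + 1 + j + 1 = k + 1 + 1 + j by ring, ← ih₁, ← ih₀, hu k]
    module

end Recurrence

theorem horadam_quaternion_recurrence {p q : ℝ} {w : ℕ → ℝ}
    (hw : ∀ n, w (n + 2) = p * w (n + 1) + q * w n) {W : ℕ → ℍ[ℝ]}
    (hW : ∀ n, W n = ⟨w n, w (n + 1), w (n + 2), w (n + 3)⟩) (n : ℕ) :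
    W (n + 2) = p • W (n + 1) + q • W n := by
  rw [hW, hW, hW]
  ext
  exacts [hw n, hw (n + 1), hw (n + 2), hw (n + 3)]

theorem stmt4_general (p q : ℝ) (w : ℕ → ℝ) (hw : ∀ n, w (n + 2) = p * w (n + 1) + q * w n)
    (W : ℕ → ℍ[ℝ]) (hW : ∀ n, W n = ⟨w n, w (n + 1), w (n + 2), w (n + 3)⟩)
    (u : ℕ → ℝ) (hu : ∀ n, u (n + 2) = p * u (n + 1) + q * u n)
    (hu0 : u 0 = 0) (hu1 : u 1 = 1)
    (m n : ℕ) (hn : 1 ≤ n) :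
    u n • W (m + 1) + (q * u (n - 1)) • W m = W (n + m) := by
  obtain ⟨k, rfl⟩ : ∃ k, n = k + 1 := ⟨n - 1, by omega⟩
  exact fib_smul_add_smul_eq_of_recurrence hu hu0 hu1 (horadam_quaternion_recurrence hw hW) k m

theorem stmt4 (p q : ℝ) (w : ℕ → ℝ) (hw : ∀ n, w (n + 2) = p * w (n + 1) + q * w n)
    (W : ℕ → ℍ[ℝ]) (hW : ∀ n, W n = ⟨w n, w (n + 1), w (n + 2), w (n + 3)⟩)
    (u : ℕ → ℝ) (hu : ∀ n, u (n + 2) = p * u (n + 1) + q * u n)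
    (hu0 : u 0 = 0) (hu1 : u 1 = 1)
    (U : ℕ → ℍ[ℝ]) (hU : ∀ n, U n = ⟨u n, u (n + 1), u (n + 2), u (n + 3)⟩)
    (m n : ℕ) (hm : 1 ≤ m) (hn : 1 ≤ n) :
    u n • W (m + 1) + (q * u (n - 1)) • W m = W (n + m) :=
  stmt4_general p q w hw W hW u hu hu0 hu1 m n hn
end

section
/- For all integers m, n ≥ 1, the identity W_{m+1}·U_{n+1} + q·W_m·U_n = U_2·W_{m+n} + q·U_1·W_{m+n−1} holds in the real quaternion algebra. -/
open Quaternion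

theorem stmt5 (p q : ℝ) (w : ℕ → ℝ) (hw : ∀ n, w (n + 2) = p * w (n + 1) + q * w n)
    (W : ℕ → ℍ[ℝ]) (hW : ∀ n, W n = ⟨w n, w (n + 1), w (n + 2), w (n + 3)⟩)
    (u : ℕ → ℝ) (hu : ∀ n, u (n + 2) = p * u (n + 1) + q * u n)
    (hu0 : u 0 = 0) (hu1 : u 1 = 1)
    (U : ℕ → ℍ[ℝ]) (hU : ∀ n, U n = ⟨u n, u (n + 1), u (n + 2), u (n + 3)⟩)
    (m n : ℕ) (hm : 1 ≤ m) (hn : 1 ≤ n) :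
    W (m + 1) * U (n + 1) + q • (W m * U n) =
      U 2 * W (m + n) + q • (U 1 * W (m + n - 1)) := by
  have hUrec : ∀ k, U (k + 2) = p • U (k + 1) + q • U k := by
    intro k
    apply Quaternion.ext <;>
      simp only [hU, QuaternionAlgebra.re_add, QuaternionAlgebra.imI_add,
        QuaternionAlgebra.imJ_add, QuaternionAlgebra.imK_add, QuaternionAlgebra.re_smul,
        QuaternionAlgebra.imI_smul, QuaternionAlgebra.imJ_smul, QuaternionAlgebra.imK_smul,
        smul_eq_mul]
    · exact hu k
    · exact hu (k + 1)
    · exact hu (k + 2)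
    · exact hu (k + 3)
  have hWrec : ∀ k, W (k + 2) = p • W (k + 1) + q • W k := by
    intro k
    apply Quaternion.ext <;>
      simp only [hW, QuaternionAlgebra.re_add, QuaternionAlgebra.imI_add,
        QuaternionAlgebra.imJ_add, QuaternionAlgebra.imK_add, QuaternionAlgebra.re_smul,
        QuaternionAlgebra.imI_smul, QuaternionAlgebra.imJ_smul, QuaternionAlgebra.imK_smul,
        smul_eq_mul]
    · exact hw k
    · exact hw (k + 1)
    · exact hw (k + 2)
    · exact hw (k + 3)
  have hu2 : u 2 = p * u 1 + q * u 0 := hu 0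
  have hu3 : u 3 = p * u 2 + q * u 1 := hu 1
  have hu4 : u 4 = p * u 3 + q * u 2 := hu 2
  have hu5 : u 5 = p * u 4 + q * u 3 := hu 3
  have hu6 : u 6 = p * u 5 + q * u 4 := hu 4
  have hw2 : w (m + 2) = p * w (m + 1) + q * w m := hw m
  have hw3 : w (m + 3) = p * w (m + 2) + q * w (m + 1) := hw (m + 1)
  have hw4 : w (m + 4) = p * w (m + 3) + q * w (m + 2) := hw (m + 2)
  have hw5 : w (m + 5) = p * w (m + 4) + q * w (m + 3) := hw (m + 3)
  have H : ∀ k : ℕ,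
      (W (m + 1) * U (k + 2) + q • (W m * U (k + 1)) =
        U 2 * W (m + k + 1) + q • (U 1 * W (m + k))) ∧
      (W (m + 1) * U (k + 3) + q • (W m * U (k + 2)) =
        U 2 * W (m + k + 2) + q • (U 1 * W (m + k + 1))) := by
    intro k
    induction k with
    | zero =>
      constructor
      · apply Quaternion.ext <;>
          simp only [Quaternion.re_mul, Quaternion.imI_mul, Quaternion.imJ_mul, Quaternion.imK_mul,
            Quaternion.re_add, Quaternion.imI_add, Quaternion.imJ_add, Quaternion.imK_add,
            Quaternion.re_smul, Quaternion.imI_smul, Quaternion.imJ_smul, Quaternion.imK_smul] <;>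
          simp only [hU, hW, Quaternion.re_mul, Quaternion.imI_mul,
            Quaternion.imJ_mul, Quaternion.imK_mul, Quaternion.re_add,
            Quaternion.imI_add, Quaternion.imJ_add, Quaternion.imK_add,
            Quaternion.re_smul, Quaternion.imI_smul, Quaternion.imJ_smul,
            Quaternion.imK_smul, smul_eq_mul, add_zero] <;>
          norm_num [add_assoc] <;>
          simp only [hw5, hw4, hw3, hw2, hu6, hu5, hu4, hu3, hu2, hu1, hu0] <;>
          ring
      · apply Quaternion.ext <;>
          simp only [Quaternion.re_mul, Quaternion.imI_mul, Quaternion.imJ_mul, Quaternion.imK_mul,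
            Quaternion.re_add, Quaternion.imI_add, Quaternion.imJ_add, Quaternion.imK_add,
            Quaternion.re_smul, Quaternion.imI_smul, Quaternion.imJ_smul, Quaternion.imK_smul] <;>
          simp only [hU, hW, Quaternion.re_mul, Quaternion.imI_mul,
            Quaternion.imJ_mul, Quaternion.imK_mul, Quaternion.re_add,
            Quaternion.imI_add, Quaternion.imJ_add, Quaternion.imK_add,
            Quaternion.re_smul, Quaternion.imI_smul, Quaternion.imJ_smul,
            Quaternion.imK_smul, smul_eq_mul, add_zero] <;>
          norm_num [add_assoc] <;>
          simp only [hw5, hw4, hw3, hw2, hu6, hu5, hu4, hu3, hu2, hu1, hu0] <;>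
          ring
    | succ k ih =>
      obtain ⟨ih1, ih2⟩ := ih
      refine ⟨ih2, ?_⟩
      have e1 : U (k + 1 + 3) = p • U (k + 3) + q • U (k + 2) := hUrec (k + 2)
      have e2 : U (k + 1 + 2) = p • U (k + 2) + q • U (k + 1) := hUrec (k + 1)
      have e3 : W (m + (k + 1) + 2) = p • W (m + k + 2) + q • W (m + k + 1) := hWrec (m + k + 1)
      have e4 : W (m + (k + 1) + 1) = p • W (m + k + 1) + q • W (m + k) := hWrec (m + k)
      calc W (m + 1) * U (k + 1 + 3) + q • (W m * U (k + 1 + 2))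
          = p • (W (m + 1) * U (k + 3) + q • (W m * U (k + 2))) +
            q • (W (m + 1) * U (k + 2) + q • (W m * U (k + 1))) := by
            rw [e1, e2]; simp only [mul_add, mul_smul_comm, smul_add, smul_smul]; module
        _ = p • (U 2 * W (m + k + 2) + q • (U 1 * W (m + k + 1))) +
            q • (U 2 * W (m + k + 1) + q • (U 1 * W (m + k))) := by rw [ih1, ih2]
        _ = U 2 * W (m + (k + 1) + 2) + q • (U 1 * W (m + (k + 1) + 1)) := by
            rw [e3, e4]; simp only [mul_add, mul_smul_comm, smul_add, smul_smul]; module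
  obtain ⟨n', rfl⟩ : ∃ n', n = n' + 1 := ⟨n - 1, by omega⟩
  exact (H n').1
end

section
/- For all integers m, n ≥ 1, the identity W_{m+1}·W_{n+1} + q·W_m·W_n = W_2·W_{m+n} + q·W_1·W_{m+n−1} holds in the real quaternion algebra. -/
/-! Writing `F(m, n) = W_{m+1} W_{n+1} + q W_m W_n`, one step of the recurrence applied to the
left factor and then undone on the right factor shows `F(m + 1, n) = F(m, n + 1)`, even though the
quaternion product is not commutative. Hence `F(m, n) = F(1, m + n - 1)`, which is the right-hand
side. -/

open Quaternion

section ShiftInvariance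

variable {R A : Type*} [CommSemiring R] [Semiring A] [Algebra R A] {p q : R} {U V : ℕ → A}

theorem mul_add_smul_mul_shift (hU : ∀ k, U (k + 2) = p • U (k + 1) + q • U k)
    (hV : ∀ k, V (k + 2) = p • V (k + 1) + q • V k) (m n : ℕ) :
    U (m + 2) * V (n + 1) + q • (U (m + 1) * V n) =
      U (m + 1) * V (n + 2) + q • (U m * V (n + 1)) := by
  rw [hU, hV]
  simp only [add_mul, mul_add, smul_mul_assoc, mul_smul_comm]
  abel

theorem mul_add_smul_mul_shift_iterate (hU : ∀ k, U (k + 2) = p • U (k + 1) + q • U k)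
    (hV : ∀ k, V (k + 2) = p • V (k + 1) + q • V k) (m n k : ℕ) :
    U (m + k + 1) * V (n + 1) + q • (U (m + k) * V n) =
      U (m + 1) * V (n + k + 1) + q • (U m * V (n + k)) := by
  induction k generalizing m n with
  | zero => rfl
  | succ k ih =>
    calc U (m + (k + 1) + 1) * V (n + 1) + q • (U (m + (k + 1)) * V n)
        = U ((m + 1) + k + 1) * V (n + 1) + q • (U ((m + 1) + k) * V n) := by
          simp only [Nat.add_right_comm m 1 k, add_assoc]
      _ = U (m + 2) * V (n + k + 1) + q • (U (m + 1) * V (n + k)) := ih (m + 1) n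
      _ = U (m + 1) * V (n + (k + 1) + 1) + q • (U m * V (n + (k + 1))) :=
          mul_add_smul_mul_shift hU hV m (n + k)

end ShiftInvariance

theorem quaternion_recurrence_of_components {p q : ℝ} {w : ℕ → ℝ}
    (hw : ∀ n, w (n + 2) = p * w (n + 1) + q * w n)
    {W : ℕ → ℍ[ℝ]} (hW : ∀ n, W n = ⟨w n, w (n + 1), w (n + 2), w (n + 3)⟩) (k : ℕ) :
    W (k + 2) = p • W (k + 1) + q • W k := by
  rw [hW, hW, hW]
  ext <;> exact hw _

theorem stmt6_general (p q : ℝ) (w : ℕ → ℝ) (hw : ∀ n, w (n + 2) = p * w (n + 1) + q * w n)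
    (W : ℕ → ℍ[ℝ]) (hW : ∀ n, W n = ⟨w n, w (n + 1), w (n + 2), w (n + 3)⟩)
    (m n : ℕ) (hm : 1 ≤ m) :
    W (m + 1) * W (n + 1) + q • (W m * W n) =
      W 2 * W (m + n) + q • (W 1 * W (m + n - 1)) := by
  have hrec := quaternion_recurrence_of_components hw hW
  obtain ⟨k, rfl⟩ := Nat.exists_eq_add_of_le' hm
  have := mul_add_smul_mul_shift_iterate hrec hrec 1 n k
  rwa [show k + 1 + n = n + k + 1 by omega, Nat.add_sub_cancel,
    Nat.add_comm k 1]

theorem stmt6 (p q : ℝ) (w : ℕ → ℝ) (hw : ∀ n, w (n + 2) = p * w (n + 1) + q * w n)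
    (W : ℕ → ℍ[ℝ]) (hW : ∀ n, W n = ⟨w n, w (n + 1), w (n + 2), w (n + 3)⟩)
    (m n : ℕ) (hm : 1 ≤ m) (hn : 1 ≤ n) :
    W (m + 1) * W (n + 1) + q • (W m * W n) =
      W 2 * W (m + n) + q • (W 1 * W (m + n - 1)) :=
  stmt6_general p q w hw W hW m n hm
end

section
/- For every positive integer n, W_{n+1}² + q·W_n² = W_1·W_{2n+1} + q·W_0·W_{2n} in the real quaternion algebra. -/
open Quaternion

theorem stmt7 (p q : ℝ) (w : ℕ → ℝ) (hw : ∀ n, w (n + 2) = p * w (n + 1) + q * w n)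
    (W : ℕ → ℍ[ℝ]) (hW : ∀ n, W n = ⟨w n, w (n + 1), w (n + 2), w (n + 3)⟩)
    (n : ℕ) (hn : 1 ≤ n) :
    (W (n + 1)) ^ 2 + q • (W n) ^ 2 =
      W 1 * W (2 * n + 1) + q • (W 0 * W (2 * n)) := by
  have hrec : ∀ m, W (m + 2) = p • W (m + 1) + q • W m := by
    intro m
    ext <;> simp [Quaternion.re_smul] <;> simp [hW, hw]
  have key : ∀ m k, W (m + 1) * W (k + 1) + q • (W m * W k) =
      W 1 * W (m + k + 1) + q • (W 0 * W (m + k)) := by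
    intro m
    induction m with
    | zero => intro k; simp
    | succ m ih =>
      intro k
      have h1 := ih (k + 1)
      have e1 : W (m + 1 + 1) = p • W (m + 1) + q • W m := hrec m
      have e2 : W (k + 1 + 1) = p • W (k + 1) + q • W k := hrec k
      have : W (m + 1 + 1) * W (k + 1) + q • (W (m + 1) * W k) =
          W (m + 1) * W (k + 1 + 1) + q • (W m * W (k + 1)) := by
        rw [e1, e2]
        simp only [add_mul, mul_add, smul_mul_assoc, mul_smul_comm, smul_add, smul_smul]
        abel
      rw [this, h1]
      ring_nf
  have h := key n n
  rw [sq, sq]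
  have : n + n = 2 * n := by ring
  rw [this] at h
  exact h
end

section
/- For every positive integer n, W_{n+1}² − q²·W_{n−1}² = p·(W_1·W_{2n} + q·W_0·W_{2n−1}) in the real quaternion algebra. -/
open Quaternion

theorem stmt8 (p q : ℝ) (w : ℕ → ℝ) (hw : ∀ n, w (n + 2) = p * w (n + 1) + q * w n)
    (W : ℕ → ℍ[ℝ]) (hW : ∀ n, W n = ⟨w n, w (n + 1), w (n + 2), w (n + 3)⟩)
    (n : ℕ) (hn : 1 ≤ n) :
    (W (n + 1)) ^ 2 - (q ^ 2) • (W (n - 1)) ^ 2 =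
      p • (W 1 * W (2 * n) + q • (W 0 * W (2 * n - 1))) := by
  have hrec : ∀ k, W (k + 2) = p • W (k + 1) + q • W k := by
    intro k
    rw [hW, hW, hW]
    ext <;> simp [hw] <;> rfl
  have G : ∀ a c, W (a + 2) * W (c + 1) + q • (W (a + 1) * W c) =
      W (a + 1) * W (c + 2) + q • (W a * W (c + 1)) := by
    intro a c
    rw [hrec a, hrec c]
    simp only [add_mul, mul_add, smul_mul_assoc, mul_smul_comm, smul_add, smul_smul]
    module
  have Q : ∀ k c, W (k + 1) * W (c + 1) + q • (W k * W c) =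
      W 1 * W (k + c + 1) + q • (W 0 * W (k + c)) := by
    intro k
    induction k with
    | zero => intro c; simp
    | succ k ih =>
      intro c
      have h1 := G k c
      have h2 := ih (c + 1)
      rw [show k + 1 + c + 1 = k + (c + 1) + 1 from by omega,
        show k + 1 + c = k + (c + 1) from by omega]
      calc W (k + 1 + 1) * W (c + 1) + q • (W (k + 1) * W c)
          = W (k + 1) * W (c + 1 + 1) + q • (W k * W (c + 1)) := h1
        _ = W 1 * W (k + (c + 1) + 1) + q • (W 0 * W (k + (c + 1))) := h2
  obtain ⟨m, rfl⟩ : ∃ m, n = m + 1 := ⟨n - 1, by omega⟩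
  have hq := Q (m + 1) m
  rw [show m + 1 + m + 1 = 2 * (m + 1) from by omega,
    show m + 1 + m = 2 * (m + 1) - 1 from by omega] at hq
  rw [show m + 1 + 1 = m + 2 from rfl, show m + 1 - 1 = m from rfl, ← hq]
  rw [sq (W (m + 2)), sq (W m), hrec m]
  simp only [add_mul, mul_add, smul_mul_assoc, mul_smul_comm, smul_add, smul_smul]
  module
end

section
/- For all positive integers n, r, s: Z_{n+r}·W_{n+s} − Z_n·W_{n+r+s} = (−q)^n·u_r·(Z_1·W_s − Z_0·W_{s+1}), where u_r is the r-th (p,q)-Fibonacci number (a Catalan-type identity for two Horadam quaternion sequences). -/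
/-!
For fixed `n` and `s`, the left-hand side is, as a function of `r`, a solution of the Horadam
recurrence (a sum of shifted solutions multiplied by constants on one side) that vanishes at
`r = 0`; hence it is `u r` times its value at `r = 1`. That value is a Casoratian
`Z (n + 1) * W (n + s) - Z n * W (n + s + 1)`, which the recurrence multiplies by `-q` at each
step, so it equals `(-q) ^ n` times its value at `n = 0`.
-/

open Quaternion

def IsHoradam {R M : Type*} [SMul R M] [Add M] (p q : R) (X : ℕ → M) : Prop :=
  ∀ n, X (n + 2) = p • X (n + 1) + q • X n

namespace IsHoradam

section Module

variable {R M : Type*} [Ring R] [AddCommGroup M] [Module R M] {p q : R} {X Y : ℕ → M}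

theorem shift (hX : IsHoradam p q X) (k : ℕ) : IsHoradam p q (fun n ↦ X (k + n)) :=
  fun n ↦ hX (k + n)

theorem sub (hX : IsHoradam p q X) (hY : IsHoradam p q Y) : IsHoradam p q (X - Y) := by
  intro n
  simp only [Pi.sub_apply, hX n, hY n, smul_sub]
  abel

theorem eq_smul_of_eq_zero (hX : IsHoradam p q X) (hX0 : X 0 = 0) {u : ℕ → R}
    (hu : IsHoradam p q u) (hu0 : u 0 = 0) (hu1 : u 1 = 1) (n : ℕ) : X n = u n • X 1 := by
  induction n using Nat.twoStepInduction with
  | zero => rw [hX0, hu0, zero_smul]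
  | one => rw [hu1, one_smul]
  | more n ih₀ ih₁ =>
    rw [hX, hu, ih₀, ih₁, smul_smul, smul_smul, add_smul, smul_eq_mul, smul_eq_mul]

end Module

section Algebra

variable {R A : Type*} [CommRing R] [Ring A] [Algebra R A] {p q : R} {X Y : ℕ → A}

theorem mul_const (hX : IsHoradam p q X) (a : A) : IsHoradam p q (fun n ↦ X n * a) := by
  intro n
  simp only [hX n, add_mul, smul_mul_assoc]

theorem const_mul (hX : IsHoradam p q X) (a : A) : IsHoradam p q (fun n ↦ a * X n) := by
  intro n
  simp only [hX n, mul_add, mul_smul_comm]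

theorem mul_sub_mul_eq_neg_pow_smul (hX : IsHoradam p q X) (hY : IsHoradam p q Y) (s m : ℕ) :
    X (m + 1) * Y (m + s) - X m * Y (m + s + 1) = (-q) ^ m • (X 1 * Y s - X 0 * Y (s + 1)) := by
  induction m with
  | zero => simp
  | succ m ih =>
    rw [Nat.add_right_comm m 1 s, hX, hY, pow_succ', mul_smul, ← ih]
    simp only [add_mul, mul_add, smul_mul_assoc, mul_smul_comm, smul_sub]
    module

end Algebra

theorem quaternionAlgebra_mk {R : Type*} [CommRing R] {c₁ c₂ c₃ : R} {p q : R} {x : ℕ → R}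
    (hx : IsHoradam p q x) :
    IsHoradam p q (fun n ↦ (⟨x n, x (n + 1), x (n + 2), x (n + 3)⟩ : ℍ[R, c₁, c₂, c₃])) := by
  intro n
  ext <;> exact hx _

end IsHoradam

theorem stmt9_general (p q : ℝ) (w : ℕ → ℝ) (hw : ∀ n, w (n + 2) = p * w (n + 1) + q * w n)
    (W : ℕ → ℍ[ℝ]) (hW : ∀ n, W n = ⟨w n, w (n + 1), w (n + 2), w (n + 3)⟩)
    (z : ℕ → ℝ) (hz : ∀ n, z (n + 2) = p * z (n + 1) + q * z n)
    (Z : ℕ → ℍ[ℝ]) (hZ : ∀ n, Z n = ⟨z n, z (n + 1), z (n + 2), z (n + 3)⟩)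
    (u : ℕ → ℝ) (hu : ∀ n, u (n + 2) = p * u (n + 1) + q * u n)
    (hu0 : u 0 = 0) (hu1 : u 1 = 1)
    (n r s : ℕ) :
    Z (n + r) * W (n + s) - Z n * W (n + r + s) =
      ((-q) ^ n * u r) • (Z 1 * W s - Z 0 * W (s + 1)) := by
  have hW' : IsHoradam p q W := funext hW ▸ IsHoradam.quaternionAlgebra_mk hw
  have hZ' : IsHoradam p q Z := funext hZ ▸ IsHoradam.quaternionAlgebra_mk hz
  have hF : IsHoradam p q fun r ↦ Z (n + r) * W (n + s) - Z n * W (n + s + r) :=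
    ((hZ'.shift n).mul_const _).sub ((hW'.shift (n + s)).const_mul _)
  have hF0 : Z (n + 0) * W (n + s) - Z n * W (n + s + 0) = 0 := sub_self _
  rw [Nat.add_right_comm n r s, hF.eq_smul_of_eq_zero hF0 hu hu0 hu1 r,
    hZ'.mul_sub_mul_eq_neg_pow_smul hW' s n, smul_smul, mul_comm]

theorem stmt9 (p q : ℝ) (w : ℕ → ℝ) (hw : ∀ n, w (n + 2) = p * w (n + 1) + q * w n)
    (W : ℕ → ℍ[ℝ]) (hW : ∀ n, W n = ⟨w n, w (n + 1), w (n + 2), w (n + 3)⟩)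
    (z : ℕ → ℝ) (hz : ∀ n, z (n + 2) = p * z (n + 1) + q * z n)
    (Z : ℕ → ℍ[ℝ]) (hZ : ∀ n, Z n = ⟨z n, z (n + 1), z (n + 2), z (n + 3)⟩)
    (u : ℕ → ℝ) (hu : ∀ n, u (n + 2) = p * u (n + 1) + q * u n)
    (hu0 : u 0 = 0) (hu1 : u 1 = 1)
    (U : ℕ → ℍ[ℝ]) (hU : ∀ n, U n = ⟨u n, u (n + 1), u (n + 2), u (n + 3)⟩)
    (n r s : ℕ) (hn : 1 ≤ n) (hr : 1 ≤ r) (hs : 1 ≤ s) :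
    Z (n + r) * W (n + s) - Z n * W (n + r + s) =
      ((-q) ^ n * u r) • (Z 1 * W s - Z 0 * W (s + 1)) :=
  stmt9_general p q w hw W hW z hz Z hZ u hu hu0 hu1 n r s
end

section
/- For all positive integers n, r, s: U_{n+r}·U_{n+s} − U_n·U_{n+r+s} = (−q)^n·u_r·(U_1·U_s − U_0·U_{s+1}) in the real quaternion algebra. -/
/-! Only the recurrence `U (m + 2) = p • U (m + 1) + q • U m` matters, which the quaternions inherit
componentwise from `u`. As a function of `r`, the left side satisfies the scalar recurrence with
values `0` and the `r = 1` difference at `r = 0, 1`, so it is `u r` times the `r = 1` difference.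
Shifting `n` by one multiplies that difference by `-q`, since the terms carrying `p` cancel. -/

open Quaternion

section LinearRecurrence

variable {R A : Type*} [CommRing R] [Ring A] [Algebra R A] {p q : R} {U : ℕ → A}

theorem mul_sub_mul_shift_eq_neg_pow_smul (hU : ∀ m, U (m + 2) = p • U (m + 1) + q • U m)
    (s m : ℕ) :
    U (m + 1) * U (m + s) - U m * U (m + s + 1) =
      (-q) ^ m • (U 1 * U s - U 0 * U (s + 1)) := by
  induction m with
  | zero => simp
  | succ m ih =>
    rw [show m + 1 + s = m + s + 1 by omega, hU m, hU (m + s), pow_succ', mul_smul, ← ih]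
    simp only [add_mul, mul_add, smul_mul_assoc, mul_smul_comm]
    module

theorem mul_sub_mul_eq_smul_mul_sub_mul (hU : ∀ m, U (m + 2) = p • U (m + 1) + q • U m)
    {u : ℕ → R} (hu : ∀ k, u (k + 2) = p * u (k + 1) + q * u k) (hu0 : u 0 = 0) (hu1 : u 1 = 1)
    (n s k : ℕ) :
    U (n + k) * U (n + s) - U n * U (n + k + s) =
      u k • (U (n + 1) * U (n + s) - U n * U (n + s + 1)) := by
  induction k using Nat.twoStepInduction with
  | zero => simp [hu0]
  | one => rw [hu1, one_smul, Nat.add_right_comm]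
  | more k ih₀ ih₁ =>
    rw [show n + (k + 1) + s = n + k + s + 1 by omega, ← add_assoc] at ih₁
    rw [show n + (k + 2) + s = n + k + s + 2 by omega, ← add_assoc, hU, hU, hu, add_smul,
      mul_smul, mul_smul, ← ih₀, ← ih₁]
    simp only [add_mul, mul_add, smul_mul_assoc, mul_smul_comm]
    module

end LinearRecurrence

theorem quaternion_recurrence {p q : ℝ} {u : ℕ → ℝ}
    (hu : ∀ n, u (n + 2) = p * u (n + 1) + q * u n) {U : ℕ → ℍ[ℝ]}
    (hU : ∀ n, U n = ⟨u n, u (n + 1), u (n + 2), u (n + 3)⟩) (m : ℕ) :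
    U (m + 2) = p • U (m + 1) + q • U m := by
  rw [hU, hU, hU]
  ext <;> exact hu _

theorem stmt10_general (p q : ℝ) (u : ℕ → ℝ) (hu : ∀ n, u (n + 2) = p * u (n + 1) + q * u n)
    (hu0 : u 0 = 0) (hu1 : u 1 = 1)
    (U : ℕ → ℍ[ℝ]) (hU : ∀ n, U n = ⟨u n, u (n + 1), u (n + 2), u (n + 3)⟩)
    (n r s : ℕ) :
    U (n + r) * U (n + s) - U n * U (n + r + s) =
      ((-q) ^ n * u r) • (U 1 * U s - U 0 * U (s + 1)) := by
  have hUrec := quaternion_recurrence hu hU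
  rw [mul_sub_mul_eq_smul_mul_sub_mul hUrec hu hu0 hu1,
    mul_sub_mul_shift_eq_neg_pow_smul hUrec, smul_smul, mul_comm]

theorem stmt10 (p q : ℝ) (u : ℕ → ℝ) (hu : ∀ n, u (n + 2) = p * u (n + 1) + q * u n)
    (hu0 : u 0 = 0) (hu1 : u 1 = 1)
    (U : ℕ → ℍ[ℝ]) (hU : ∀ n, U n = ⟨u n, u (n + 1), u (n + 2), u (n + 3)⟩)
    (n r s : ℕ) (hn : 1 ≤ n) (hr : 1 ≤ r) (hs : 1 ≤ s) :
    U (n + r) * U (n + s) - U n * U (n + r + s) =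
      ((-q) ^ n * u r) • (U 1 * U s - U 0 * U (s + 1)) :=
  stmt10_general p q u hu hu0 hu1 U hU n r s
end

section
/- For all positive integers n, r, s: W_{n+r}·W_{n+s} − W_n·W_{n+r+s} = (−q)^n·u_r·(U_1·U_s − U_0·U_{s+1})·(w_1² − p·w_1·w_0 − q·w_0²). -/
/-!
Expanding both quaternion products in the basis `1, i, j, k`, the coefficient of `eᵢ eⱼ` on the
left is `w_{n+r+i} w_{n+s+j} - w_{n+i} w_{n+r+s+j}`, so the theorem follows coefficientwise from
`w_{n+r+a} w_{n+b} - w_{n+a} w_{n+r+b} = (-q)^n u_r (u_{a+1} u_b - u_a u_{b+1}) (w_1² - w_0 w_2)`.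
Both sides solve the recurrence in `a` and in `b`, so it suffices to check `a, b ∈ {0, 1}`, where
it is Vajda's identity `w_{n+r} w_{n+1} - w_n w_{n+r+1} = (-q)^n u_r (w_1² - w_0 w_2)`; that one
follows in the same way, in `r`, from Cassini's identity.
-/

open Quaternion Finset

section Recurrence

variable {R : Type*} [CommRing R] {p q : R}

theorem eq_of_recurrence {x y : ℕ → R} (hx : ∀ k, x (k + 2) = p * x (k + 1) + q * x k)
    (hy : ∀ k, y (k + 2) = p * y (k + 1) + q * y k) (h0 : x 0 = y 0) (h1 : x 1 = y 1) :
    x = y := by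
  let E : LinearRecurrence R := ⟨2, ![q, p]⟩
  have sol {z : ℕ → R} (hz : ∀ k, z (k + 2) = p * z (k + 1) + q * z k) : E.IsSolution z :=
    fun k => by simp [E, Fin.sum_univ_two, hz, add_comm]
  refine (E.eq_iff_eqOn_range_order x y (sol hx) (sol hy)).2 fun k hk => ?_
  obtain rfl | rfl : k = 0 ∨ k = 1 := by simp [E] at hk; omega
  exacts [h0, h1]

theorem eq_of_recurrence₂ {Φ Ψ : ℕ → ℕ → R}
    (hΦ₁ : ∀ a b, Φ (a + 2) b = p * Φ (a + 1) b + q * Φ a b)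
    (hΦ₂ : ∀ a b, Φ a (b + 2) = p * Φ a (b + 1) + q * Φ a b)
    (hΨ₁ : ∀ a b, Ψ (a + 2) b = p * Ψ (a + 1) b + q * Ψ a b)
    (hΨ₂ : ∀ a b, Ψ a (b + 2) = p * Ψ a (b + 1) + q * Ψ a b)
    (h00 : Φ 0 0 = Ψ 0 0) (h01 : Φ 0 1 = Ψ 0 1) (h10 : Φ 1 0 = Ψ 1 0) (h11 : Φ 1 1 = Ψ 1 1) :
    Φ = Ψ := by
  have h0 : Φ 0 = Ψ 0 := eq_of_recurrence (hΦ₂ 0) (hΨ₂ 0) h00 h01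
  have h1 : Φ 1 = Ψ 1 := eq_of_recurrence (hΦ₂ 1) (hΨ₂ 1) h10 h11
  funext a b
  exact congrFun (eq_of_recurrence (x := (Φ · b)) (y := (Ψ · b)) (hΦ₁ · b) (hΨ₁ · b)
    (congrFun h0 b) (congrFun h1 b)) a

end Recurrence

namespace Horadam

variable {R : Type*} [CommRing R] {p q : R} {w u : ℕ → R}
  (hw : ∀ k, w (k + 2) = p * w (k + 1) + q * w k)
include hw

theorem cassini (n : ℕ) :
    w (n + 1) ^ 2 - w n * w (n + 2) = (-q) ^ n * (w 1 ^ 2 - w 0 * w 2) := by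
  induction n with
  | zero => ring
  | succ n ih =>
    linear_combination (norm := ring_nf) (-q) * ih - w (n + 1) * hw (n + 1) + w (n + 2) * hw n

variable (hu : ∀ k, u (k + 2) = p * u (k + 1) + q * u k) (hu0 : u 0 = 0) (hu1 : u 1 = 1)
include hu hu0 hu1

theorem vajda_one (n r : ℕ) :
    w (n + r) * w (n + 1) - w n * w (n + r + 1) = (-q) ^ n * u r * (w 1 ^ 2 - w 0 * w 2) := by
  have := eq_of_recurrence (p := p) (q := q)
    (x := fun k => w (n + k) * w (n + 1) - w n * w (n + k + 1))
    (y := fun k => (-q) ^ n * u k * (w 1 ^ 2 - w 0 * w 2))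
    (fun k => by
      linear_combination (norm := ring_nf) w (n + 1) * hw (n + k) - w n * hw (n + k + 1))
    (fun k => by linear_combination (-q) ^ n * (w 1 ^ 2 - w 0 * w 2) * hu k)
    (by simp [hu0]) (by simp only [hu1]; linear_combination cassini hw n)
  exact congrFun this r

theorem vajda (n r a b : ℕ) :
    w (n + r + a) * w (n + b) - w (n + a) * w (n + r + b) =
      (-q) ^ n * u r * (u (a + 1) * u b - u a * u (b + 1)) * (w 1 ^ 2 - w 0 * w 2) := by
  have := eq_of_recurrence₂ (p := p) (q := q)
    (Φ := fun i j => w (n + r + i) * w (n + j) - w (n + i) * w (n + r + j))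
    (Ψ := fun i j => (-q) ^ n * u r * (u (i + 1) * u j - u i * u (j + 1)) * (w 1 ^ 2 - w 0 * w 2))
    (fun i j => by
      linear_combination (norm := ring_nf) w (n + j) * hw (n + r + i) - w (n + r + j) * hw (n + i))
    (fun i j => by
      linear_combination (norm := ring_nf) w (n + r + i) * hw (n + j) - w (n + i) * hw (n + r + j))
    (fun i j => by
      linear_combination (norm := ring_nf)
        (-q) ^ n * u r * (w 1 ^ 2 - w 0 * w 2) * (u j * hu (i + 1) - u (j + 1) * hu i))
    (fun i j => by
      linear_combination (norm := ring_nf)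
        (-q) ^ n * u r * (w 1 ^ 2 - w 0 * w 2) * (u (i + 1) * hu j - u i * hu (j + 1)))
    (by ring) ?_ ?_ (by ring)
  · exact congrFun (congrFun this a) b
  · simpa [hu0, hu1] using vajda_one hw hu hu0 hu1 n r
  · simp only [hu0, hu1]
    linear_combination -vajda_one hw hu hu0 hu1 n r

end Horadam

section QuaternionSequence

variable {R : Type*} [CommRing R]

def seqQuat (x : ℕ → R) (m : ℕ) : ℍ[R] := ⟨x m, x (m + 1), x (m + 2), x (m + 3)⟩

def quatBasis : Fin 4 → ℍ[R] := ![1, ⟨0, 1, 0, 0⟩, ⟨0, 0, 1, 0⟩, ⟨0, 0, 0, 1⟩]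

theorem seqQuat_eq_sum (x : ℕ → R) (m : ℕ) :
    seqQuat x m = ∑ i : Fin 4, x (m + i) • quatBasis i := by
  -- `quatBasis` may only be unfolded after the `smul` projection lemmas have fired
  ext <;> simp [Fin.sum_univ_four, seqQuat] <;> simp [quatBasis]

theorem seqQuat_mul_sub_mul (x : ℕ → R) (a b c d : ℕ) :
    seqQuat x a * seqQuat x b - seqQuat x c * seqQuat x d =
      ∑ i : Fin 4, ∑ j : Fin 4,
        (x (a + i) * x (b + j) - x (c + i) * x (d + j)) • (quatBasis i * quatBasis j) := by
  simp only [seqQuat_eq_sum, Fintype.sum_mul_sum, smul_mul_smul_comm, sub_smul, sum_sub_distrib]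

end QuaternionSequence

theorem stmt12_general (p q : ℝ) (w : ℕ → ℝ) (hw : ∀ n, w (n + 2) = p * w (n + 1) + q * w n)
    (W : ℕ → ℍ[ℝ]) (hW : ∀ n, W n = ⟨w n, w (n + 1), w (n + 2), w (n + 3)⟩)
    (u : ℕ → ℝ) (hu : ∀ n, u (n + 2) = p * u (n + 1) + q * u n)
    (hu0 : u 0 = 0) (hu1 : u 1 = 1)
    (U : ℕ → ℍ[ℝ]) (hU : ∀ n, U n = ⟨u n, u (n + 1), u (n + 2), u (n + 3)⟩)
    (n r s : ℕ) :
    W (n + r) * W (n + s) - W n * W (n + r + s) =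
      ((-q) ^ n * u r * (w 1 ^ 2 - p * w 1 * w 0 - q * w 0 ^ 2)) •
        (U 1 * U s - U 0 * U (s + 1)) := by
  obtain rfl : W = seqQuat w := funext hW
  obtain rfl : U = seqQuat u := funext hU
  have hc : w 1 ^ 2 - p * w 1 * w 0 - q * w 0 ^ 2 = w 1 ^ 2 - w 0 * w 2 := by rw [hw 0]; ring
  simp only [seqQuat_mul_sub_mul, smul_sum]
  refine sum_congr rfl fun i _ => sum_congr rfl fun j _ => ?_
  rw [smul_smul, hc]
  congr 1
  linear_combination (norm := ring_nf) Horadam.vajda hw hu hu0 hu1 n r i (s + j)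

theorem stmt12 (p q : ℝ) (w : ℕ → ℝ) (hw : ∀ n, w (n + 2) = p * w (n + 1) + q * w n)
    (W : ℕ → ℍ[ℝ]) (hW : ∀ n, W n = ⟨w n, w (n + 1), w (n + 2), w (n + 3)⟩)
    (u : ℕ → ℝ) (hu : ∀ n, u (n + 2) = p * u (n + 1) + q * u n)
    (hu0 : u 0 = 0) (hu1 : u 1 = 1)
    (U : ℕ → ℍ[ℝ]) (hU : ∀ n, U n = ⟨u n, u (n + 1), u (n + 2), u (n + 3)⟩)
    (n r s : ℕ) (hn : 1 ≤ n) (hr : 1 ≤ r) (hs : 1 ≤ s) :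
    W (n + r) * W (n + s) - W n * W (n + r + s) =
      ((-q) ^ n * u r * (w 1 ^ 2 - p * w 1 * w 0 - q * w 0 ^ 2)) •
        (U 1 * U s - U 0 * U (s + 1)) :=
  stmt12_general p q w hw W hW u hu hu0 hu1 U hU n r s
end

section
/- For every integer n ≥ 1, V_n² − d·U_n² = (−q)^{n−1}·(V_1² − d·U_1²), where d = p² + 4q. -/
open Quaternion

theorem stmt13 (p q d : ℝ) (hd : d = p ^ 2 + 4 * q) (u : ℕ → ℝ) (hu : ∀ n, u (n + 2) = p * u (n + 1) + q * u n)
    (hu0 : u 0 = 0) (hu1 : u 1 = 1)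
    (U : ℕ → ℍ[ℝ]) (hU : ∀ n, U n = ⟨u n, u (n + 1), u (n + 2), u (n + 3)⟩)
    (v : ℕ → ℝ) (hv : ∀ n, v (n + 2) = p * v (n + 1) + q * v n)
    (hv0 : v 0 = 2) (hv1 : v 1 = p)
    (V : ℕ → ℍ[ℝ]) (hV : ∀ n, V n = ⟨v n, v (n + 1), v (n + 2), v (n + 3)⟩)
    (n : ℕ) (hn : 1 ≤ n) :
    (V n) ^ 2 - d • (U n) ^ 2 =
      ((-q) ^ (n - 1)) • ((V 1) ^ 2 - d • (U 1) ^ 2) := by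
  subst hd
  have hvu : ∀ m, v m = 2 * u (m + 1) - p * u m := by
    have key : ∀ m, v m = 2 * u (m + 1) - p * u m ∧ v (m + 1) = 2 * u (m + 2) - p * u (m + 1) := by
      intro m
      induction m with
      | zero =>
        refine ⟨by simp [hv0, hu0, hu1], ?_⟩
        rw [hv1, hu 0, hu0, hu1]; ring
      | succ k ih =>
        refine ⟨ih.2, ?_⟩
        rw [hv k, hu (k + 1), ih.1, ih.2, hu k]
        ring
    exact fun m => (key m).1
  have step : ∀ m, (V (m + 1)) ^ 2 - ((p ^ 2 + 4 * q) : ℝ) • (U (m + 1)) ^ 2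
      = (-q) • ((V m) ^ 2 - ((p ^ 2 + 4 * q) : ℝ) • (U m) ^ 2) := by
    intro m
    have h2 := hu m
    have h3 := hu (m + 1)
    have h4 := hu (m + 2)
    have h5 := hu (m + 3)
    have g0 := hvu m
    have g1 := hvu (m + 1)
    have g2 := hvu (m + 2)
    have g3 := hvu (m + 3)
    have g4 := hvu (m + 4)
    simp only [show m + 1 + 1 = m + 2 from rfl, show m + 1 + 2 = m + 3 from rfl,
      show m + 1 + 3 = m + 4 from rfl, show m + 2 + 1 = m + 3 from rfl,
      show m + 2 + 2 = m + 4 from rfl, show m + 3 + 1 = m + 4 from rfl,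
      show m + 3 + 2 = m + 5 from rfl, show m + 4 + 1 = m + 5 from rfl] at h2 h3 h4 h5 g0 g1 g2 g3 g4 ⊢
    ext <;>
      simp only [pow_two, Quaternion.re_mul, Quaternion.imI_mul, Quaternion.imJ_mul,
        Quaternion.imK_mul, Quaternion.re_sub, Quaternion.imI_sub, Quaternion.imJ_sub,
        Quaternion.imK_sub, Quaternion.re_smul, Quaternion.imI_smul, Quaternion.imJ_smul,
        Quaternion.imK_smul, smul_eq_mul] <;>
      simp only [hV, hU] <;>
      rw [g0, g1, g2, g3, g4, h5, h4, h3, h2] <;> ring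
  induction n with
  | zero => omega
  | succ k ih =>
    rcases Nat.eq_or_lt_of_le hn with h | h
    · rw [← h]; simp
    · have hk : 1 ≤ k := by omega
      rw [step k, ih hk, smul_smul, show k + 1 - 1 = k - 1 + 1 by omega, pow_succ]
      ring_nf
end

section
/- For all integers m, n ≥ 1: v_m·V_n + d·u_m·U_n = 2·V_{m+n}, where d = p² + 4q and scalar multiplication of quaternions by the real numbers v_m, u_m is used. -/
/-! Both sides are quaternions whose four components are values of the scalar identity
`2 v_{m+k} = v_m v_k + d u_m u_k`, proved by two-step induction on `m` from its case `m = 1`,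
`2 v_{k+1} = p v_k + d u_k`, which is itself a two-step induction on `k`. -/

open Quaternion

section LucasFibonacci

variable {R : Type*} [CommRing R] {p q : R} {u v : ℕ → R}
  (hu : ∀ n, u (n + 2) = p * u (n + 1) + q * u n) (hu0 : u 0 = 0) (hu1 : u 1 = 1)
  (hv : ∀ n, v (n + 2) = p * v (n + 1) + q * v n) (hv0 : v 0 = 2) (hv1 : v 1 = p)
include hu hu0 hu1 hv hv0 hv1

theorem two_mul_lucas_succ (k : ℕ) : 2 * v (k + 1) = p * v k + (p ^ 2 + 4 * q) * u k := by
  induction k using Nat.twoStepInduction with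
  | zero => rw [hu0, hv0, hv1]; ring
  | one => rw [hv 0, hv0, hv1, hu1]; ring
  | more k ih₀ ih₁ =>
    rw [hu k, hv k, hv (k + 1)]
    linear_combination q * ih₀ + p * ih₁

theorem two_mul_lucas_add (m k : ℕ) :
    2 * v (m + k) = v m * v k + (p ^ 2 + 4 * q) * u m * u k := by
  induction m using Nat.twoStepInduction generalizing k with
  | zero => rw [hu0, hv0, Nat.zero_add]; ring
  | one => rw [hu1, hv1, Nat.add_comm, two_mul_lucas_succ hu hu0 hu1 hv hv0 hv1]; ring
  | more m ih₀ ih₁ =>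
    rw [hu m, hv m, show m + 2 + k = m + k + 2 by omega, hv (m + k),
      show m + k + 1 = m + 1 + k by omega]
    linear_combination q * ih₀ k + p * ih₁ k

end LucasFibonacci

theorem QuaternionAlgebra.smul_mk_add_smul_mk {R : Type*} [CommRing R] {c₁ c₂ c₃ : R}
    {a b c : R} {x y z : ℕ → R} (h : ∀ k, a * x k + b * y k = c * z k) (n : ℕ) :
    a • (⟨x n, x (n + 1), x (n + 2), x (n + 3)⟩ : QuaternionAlgebra R c₁ c₂ c₃) +
      b • (⟨y n, y (n + 1), y (n + 2), y (n + 3)⟩ : QuaternionAlgebra R c₁ c₂ c₃) =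
      c • (⟨z n, z (n + 1), z (n + 2), z (n + 3)⟩ : QuaternionAlgebra R c₁ c₂ c₃) := by
  ext <;> simp [h]

theorem stmt14_general (p q d : ℝ) (hd : d = p ^ 2 + 4 * q) (u : ℕ → ℝ) (hu : ∀ n, u (n + 2) = p * u (n + 1) + q * u n)
    (hu0 : u 0 = 0) (hu1 : u 1 = 1)
    (U : ℕ → ℍ[ℝ]) (hU : ∀ n, U n = ⟨u n, u (n + 1), u (n + 2), u (n + 3)⟩)
    (v : ℕ → ℝ) (hv : ∀ n, v (n + 2) = p * v (n + 1) + q * v n)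
    (hv0 : v 0 = 2) (hv1 : v 1 = p)
    (V : ℕ → ℍ[ℝ]) (hV : ∀ n, V n = ⟨v n, v (n + 1), v (n + 2), v (n + 3)⟩)
    (m n : ℕ) :
    v m • V n + (d * u m) • U n = (2 : ℝ) • V (m + n) := by
  rw [hU, hV, hV]
  subst hd
  exact QuaternionAlgebra.smul_mk_add_smul_mk (z := fun k ↦ v (m + k))
    (fun k ↦ (two_mul_lucas_add hu hu0 hu1 hv hv0 hv1 m k).symm) n

theorem stmt14 (p q d : ℝ) (hd : d = p ^ 2 + 4 * q) (u : ℕ → ℝ) (hu : ∀ n, u (n + 2) = p * u (n + 1) + q * u n)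
    (hu0 : u 0 = 0) (hu1 : u 1 = 1)
    (U : ℕ → ℍ[ℝ]) (hU : ∀ n, U n = ⟨u n, u (n + 1), u (n + 2), u (n + 3)⟩)
    (v : ℕ → ℝ) (hv : ∀ n, v (n + 2) = p * v (n + 1) + q * v n)
    (hv0 : v 0 = 2) (hv1 : v 1 = p)
    (V : ℕ → ℍ[ℝ]) (hV : ∀ n, V n = ⟨v n, v (n + 1), v (n + 2), v (n + 3)⟩)
    (m n : ℕ) (hm : 1 ≤ m) (hn : 1 ≤ n) :
    v m • V n + (d * u m) • U n = (2 : ℝ) • V (m + n) :=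
  stmt14_general p q d hd u hu hu0 hu1 U hU v hv hv0 hv1 V hV m n
end

section
/- For all integers m, n ≥ 1: u_m·V_n + v_m·U_n = 2·U_{m+n}, where scalar multiplication of quaternions by real numbers u_m, v_m is used. -/
/-!
Both `u` and `v` solve the recurrence `x (n + 2) = p x (n + 1) + q x n`, whose solutions are
determined by their first two terms. Comparing initial terms gives `v k = 2 u (k + 1) - p u k`,
and then, for fixed `m`, both sides of `u m v j + v m u j = 2 u (m + j)` are solutions in `j`
with the same first two terms. The quaternion identity is this scalar identity read off
componentwise at `j = n, n + 1, n + 2, n + 3`.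
-/

open Quaternion

section LinearRecurrence

variable {R : Type*} [CommRing R] {p q : R}

theorem eq_of_linearRecurrence {a b : ℕ → R}
    (ha : ∀ n, a (n + 2) = p * a (n + 1) + q * a n)
    (hb : ∀ n, b (n + 2) = p * b (n + 1) + q * b n)
    (h0 : a 0 = b 0) (h1 : a 1 = b 1) : a = b := by
  funext n
  induction n using Nat.twoStepInduction with
  | zero => exact h0
  | one => exact h1
  | more n ih₀ ih₁ => rw [ha, hb, ih₀, ih₁]

variable {u v : ℕ → R}
  (hu : ∀ n, u (n + 2) = p * u (n + 1) + q * u n) (hu0 : u 0 = 0) (hu1 : u 1 = 1)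
  (hv : ∀ n, v (n + 2) = p * v (n + 1) + q * v n) (hv0 : v 0 = 2) (hv1 : v 1 = p)
include hu hu0 hu1 hv hv0 hv1

theorem lucas_eq_two_mul_fib_succ_sub (k : ℕ) : v k = 2 * u (k + 1) - p * u k := by
  refine congrFun (eq_of_linearRecurrence (b := fun k ↦ 2 * u (k + 1) - p * u k) hv
    (fun n ↦ ?_) ?_ ?_) k
  · linear_combination 2 * hu (n + 1) - p * hu n
  · simp only [hv0, hu0, hu1]; ring
  · simp only [hv1, hu 0, hu0, hu1]; ring

theorem fib_mul_lucas_add_lucas_mul_fib (m j : ℕ) :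
    u m * v j + v m * u j = 2 * u (m + j) := by
  have hvm := lucas_eq_two_mul_fib_succ_sub hu hu0 hu1 hv hv0 hv1 m
  refine congrFun (eq_of_linearRecurrence (p := p) (q := q) (a := fun j ↦ u m * v j + v m * u j)
    (b := fun j ↦ 2 * u (m + j)) (fun n ↦ ?_) (fun n ↦ ?_) ?_ ?_) j
  · linear_combination u m * hv n + v m * hu n
  · linear_combination 2 * hu (m + n)
  · simp only [hv0, hu0, add_zero]; ring
  · simp only [hv1, hu1, hvm]; ring

end LinearRecurrence

theorem stmt15_general (p q : ℝ) (u : ℕ → ℝ) (hu : ∀ n, u (n + 2) = p * u (n + 1) + q * u n)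
    (hu0 : u 0 = 0) (hu1 : u 1 = 1)
    (U : ℕ → ℍ[ℝ]) (hU : ∀ n, U n = ⟨u n, u (n + 1), u (n + 2), u (n + 3)⟩)
    (v : ℕ → ℝ) (hv : ∀ n, v (n + 2) = p * v (n + 1) + q * v n)
    (hv0 : v 0 = 2) (hv1 : v 1 = p)
    (V : ℕ → ℍ[ℝ]) (hV : ∀ n, V n = ⟨v n, v (n + 1), v (n + 2), v (n + 3)⟩)
    (m n : ℕ) :
    u m • V n + v m • U n = (2 : ℝ) • U (m + n) := by
  have key := fib_mul_lucas_add_lucas_mul_fib hu hu0 hu1 hv hv0 hv1 m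
  rw [hU, hV, hU]
  ext <;> exact key _

theorem stmt15 (p q : ℝ) (u : ℕ → ℝ) (hu : ∀ n, u (n + 2) = p * u (n + 1) + q * u n)
    (hu0 : u 0 = 0) (hu1 : u 1 = 1)
    (U : ℕ → ℍ[ℝ]) (hU : ∀ n, U n = ⟨u n, u (n + 1), u (n + 2), u (n + 3)⟩)
    (v : ℕ → ℝ) (hv : ∀ n, v (n + 2) = p * v (n + 1) + q * v n)
    (hv0 : v 0 = 2) (hv1 : v 1 = p)
    (V : ℕ → ℍ[ℝ]) (hV : ∀ n, V n = ⟨v n, v (n + 1), v (n + 2), v (n + 3)⟩)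
    (m n : ℕ) (hm : 1 ≤ m) (hn : 1 ≤ n) :
    u m • V n + v m • U n = (2 : ℝ) • U (m + n) :=
  stmt15_general p q u hu hu0 hu1 U hU v hv hv0 hv1 V hV m n
end

section
/- For all integers m, n ≥ 1: V_m·V_n + d·U_m·U_n = V_1·V_{m+n−1} + d·U_1·U_{m+n−1}, where d = p² + 4q and all products are quaternion products. -/
open Quaternion
set_option maxHeartbeats 1000000

theorem stmt16 (p q d : ℝ) (hd : d = p ^ 2 + 4 * q) (u : ℕ → ℝ) (hu : ∀ n, u (n + 2) = p * u (n + 1) + q * u n)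
    (hu0 : u 0 = 0) (hu1 : u 1 = 1)
    (U : ℕ → ℍ[ℝ]) (hU : ∀ n, U n = ⟨u n, u (n + 1), u (n + 2), u (n + 3)⟩)
    (v : ℕ → ℝ) (hv : ∀ n, v (n + 2) = p * v (n + 1) + q * v n)
    (hv0 : v 0 = 2) (hv1 : v 1 = p)
    (V : ℕ → ℍ[ℝ]) (hV : ∀ n, V n = ⟨v n, v (n + 1), v (n + 2), v (n + 3)⟩)
    (m n : ℕ) (hm : 1 ≤ m) (hn : 1 ≤ n) :
    V m * V n + d • (U m * U n) =
      V 1 * V (m + n - 1) + d • (U 1 * U (m + n - 1)) := by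
  subst hd
  have hu2 : u 2 = p := by have h := hu 0; rw [hu0, hu1] at h; simpa using h
  have hu3 : u 3 = p ^ 2 + q := by have h := hu 1; rw [hu1, hu2] at h; rw [show (3:ℕ)=1+2 from rfl, h]; ring
  have hu4 : u 4 = p ^ 3 + 2 * p * q := by have h := hu 2; rw [hu2, hu3] at h; rw [show (4:ℕ)=2+2 from rfl, h]; ring
  have hu5 : u 5 = p ^ 4 + 3 * p ^ 2 * q + q ^ 2 := by have h := hu 3; rw [hu3, hu4] at h; rw [show (5:ℕ)=3+2 from rfl, h]; ring
  have hv2 : v 2 = p ^ 2 + 2 * q := by have h := hv 0; rw [hv0, hv1] at h; rw [show (2:ℕ)=0+2 from rfl, h]; ring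
  have hv3 : v 3 = p ^ 3 + 3 * p * q := by have h := hv 1; rw [hv1, hv2] at h; rw [show (3:ℕ)=1+2 from rfl, h]; ring
  have hv4 : v 4 = p ^ 4 + 4 * p ^ 2 * q + 2 * q ^ 2 := by have h := hv 2; rw [hv2, hv3] at h; rw [show (4:ℕ)=2+2 from rfl, h]; ring
  have hv5 : v 5 = p ^ 5 + 5 * p ^ 3 * q + 5 * p * q ^ 2 := by have h := hv 3; rw [hv3, hv4] at h; rw [show (5:ℕ)=3+2 from rfl, h]; ring
  set d := p ^ 2 + 4 * q with hd
  have hUrec : ∀ k, U (k + 2) = p • U (k + 1) + q • U k := by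
    intro k
    rw [hU, hU, hU]
    apply QuaternionAlgebra.ext <;> simp <;>
      [exact hu k; exact hu (k+1); exact hu (k+2); exact hu (k+3)]
  have hVrec : ∀ k, V (k + 2) = p • V (k + 1) + q • V k := by
    intro k
    rw [hV, hV, hV]
    apply QuaternionAlgebra.ext <;> simp <;>
      [exact hv k; exact hv (k+1); exact hv (k+2); exact hv (k+3)]
  -- concrete base cases
  have base : ∀ a b : ℕ, a ≤ 1 → b ≤ 1 →
      V (a+1) * V b + d • (U (a+1) * U b) = V a * V (b+1) + d • (U a * U (b+1)) := by
    intro a b ha hb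
    interval_cases a <;> interval_cases b <;>
      apply QuaternionAlgebra.ext <;>
      simp [Quaternion.re_mul, Quaternion.imI_mul, Quaternion.imJ_mul, Quaternion.imK_mul] <;>
      simp [hU, hV,
        hu0, hu1, hu2, hu3, hu4, hu5, hv0, hv1, hv2, hv3, hv4, hv5, hd] <;> ring
  have key : ∀ m n : ℕ, V (m+1) * V n + d • (U (m+1) * U n) = V m * V (n+1) + d • (U m * U (n+1)) := by
    have keyn : ∀ a : ℕ, a ≤ 1 → ∀ n : ℕ,
        V (a+1) * V n + d • (U (a+1) * U n) = V a * V (n+1) + d • (U a * U (n+1)) := by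
      intro a ha n
      induction n using Nat.twoStepInduction with
      | zero => exact base a 0 ha (by norm_num)
      | one => exact base a 1 ha le_rfl
      | more n ih1 ih2 =>
        calc V (a+1) * V (n+2) + d • (U (a+1) * U (n+2))
            = p • (V (a+1) * V (n+1) + d • (U (a+1) * U (n+1)))
              + q • (V (a+1) * V n + d • (U (a+1) * U n)) := by
              rw [hVrec n, hUrec n]; simp only [mul_add, mul_smul_comm, smul_add]; module
          _ = p • (V a * V (n+2) + d • (U a * U (n+2)))
              + q • (V a * V (n+1) + d • (U a * U (n+1))) := by rw [ih2, ih1]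
          _ = V a * V (n+3) + d • (U a * U (n+3)) := by
              rw [show n+3 = (n+1)+2 from rfl, hVrec (n+1), hUrec (n+1)]
              simp only [mul_add, mul_smul_comm, smul_add]; module
    intro m
    induction m using Nat.twoStepInduction with
    | zero => exact keyn 0 (by norm_num)
    | one => exact keyn 1 le_rfl
    | more m ih1 ih2 =>
      intro n
      calc V (m+3) * V n + d • (U (m+3) * U n)
          = p • (V (m+2) * V n + d • (U (m+2) * U n))
            + q • (V (m+1) * V n + d • (U (m+1) * U n)) := by
            rw [show m+3 = (m+1)+2 from rfl, hVrec (m+1), hUrec (m+1)]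
            simp only [add_mul, smul_mul_assoc, smul_add]; module
        _ = p • (V (m+1) * V (n+1) + d • (U (m+1) * U (n+1)))
          + q • (V m * V (n+1) + d • (U m * U (n+1))) := by rw [ih2 n, ih1 n]
        _ = V (m+2) * V (n+1) + d • (U (m+2) * U (n+1)) := by
            rw [hVrec m, hUrec m]
            simp only [add_mul, smul_mul_assoc, smul_add]; module
  obtain ⟨a, rfl⟩ : ∃ a, m = a + 1 := ⟨m - 1, by omega⟩
  have main : ∀ a n : ℕ, V (a+1) * V n + d • (U (a+1) * U n)
      = V 1 * V (a + n) + d • (U 1 * U (a + n)) := by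
    intro a
    induction a with
    | zero => intro n; simp
    | succ a ih =>
      intro n
      calc V (a+2) * V n + d • (U (a+2) * U n)
          = V (a+1) * V (n+1) + d • (U (a+1) * U (n+1)) := key (a+1) n
        _ = V 1 * V (a + (n+1)) + d • (U 1 * U (a + (n+1))) := ih (n+1)
        _ = V 1 * V (a + 1 + n) + d • (U 1 * U (a + 1 + n)) := by rw [show a + (n+1) = a+1+n from by omega]
  rw [show a + 1 + n - 1 = a + n from by omega]
  exact main a n
end

section
/- For all integers m, n ≥ 1: U_m·V_n + V_m·U_n = U_1·V_{m+n−1} + V_1·U_{m+n−1} in the real quaternion algebra. -/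
open Quaternion

theorem stmt17 (p q : ℝ) (u : ℕ → ℝ) (hu : ∀ n, u (n + 2) = p * u (n + 1) + q * u n)
    (hu0 : u 0 = 0) (hu1 : u 1 = 1)
    (U : ℕ → ℍ[ℝ]) (hU : ∀ n, U n = ⟨u n, u (n + 1), u (n + 2), u (n + 3)⟩)
    (v : ℕ → ℝ) (hv : ∀ n, v (n + 2) = p * v (n + 1) + q * v n)
    (hv0 : v 0 = 2) (hv1 : v 1 = p)
    (V : ℕ → ℍ[ℝ]) (hV : ∀ n, V n = ⟨v n, v (n + 1), v (n + 2), v (n + 3)⟩)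
    (m n : ℕ) (hm : 1 ≤ m) (hn : 1 ≤ n) :
    U m * V n + V m * U n =
      U 1 * V (m + n - 1) + V 1 * U (m + n - 1) := by
  -- v in terms of u
  have hB : ∀ k, v k = 2 * u (k + 1) - p * u k := by
    intro k
    induction k using Nat.strong_induction_on with
    | _ k ih =>
      match k with
      | 0 => simp [hv0, hu1, hu0]
      | 1 =>
        have h2 : u 2 = p := by rw [show (2:ℕ) = 0 + 2 by rfl, hu]; simp [hu0, hu1]
        simp [hv1, h2, hu1]; ring
      | (k+2) =>
        rw [hv k, ih (k+1) (by omega), ih k (by omega),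
          show k+2+1 = k+1+2 by omega, hu (k+1), hu k]
        ring
  -- shift lemma
  have key : ∀ a b, U (a+1) * V b + V (a+1) * U b = U a * V (b+1) + V a * U (b+1) := by
    intro a b
    have E2 : ∀ j, u (2 + j) = p * u (1 + j) + q * u j := fun j => by
      rw [show 2 + j = j + 2 by omega, show 1 + j = j + 1 by omega]; exact hu j
    have E3 : ∀ j, u (3 + j) = p * u (2 + j) + q * u (1 + j) := fun j => by
      rw [show 3 + j = 2 + (1 + j) by omega, E2 (1 + j), show 1 + (1 + j) = 2 + j by omega]
    have E4 : ∀ j, u (4 + j) = p * u (3 + j) + q * u (2 + j) := fun j => by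
      rw [show 4 + j = 2 + (2 + j) by omega, E2 (2 + j), show 1 + (2 + j) = 3 + j by omega]
    have E5 : ∀ j, u (5 + j) = p * u (4 + j) + q * u (3 + j) := fun j => by
      rw [show 5 + j = 2 + (3 + j) by omega, E2 (3 + j), show 1 + (3 + j) = 4 + j by omega]
    apply Quaternion.ext <;>
      simp only [Quaternion.re_mul, Quaternion.imI_mul, Quaternion.imJ_mul,
        Quaternion.imK_mul, Quaternion.re_add, Quaternion.imI_add, Quaternion.imJ_add,
        Quaternion.imK_add] <;>
      simp only [hU, hV, hB] <;>
      ring_nf <;>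
      simp only [E5, E4, E3, E2] <;>
      ring
  -- main induction on m starting at 1
  induction m, hm using Nat.le_induction generalizing n with
  | base =>
    rw [show 1 + n - 1 = n by omega]
  | succ m hm ih =>
    rw [key m n, ih (n+1) (by omega), show m + (n+1) - 1 = m + 1 + n - 1 by omega]
end

section
/- For all non-negative integers n and k: ∑_{j=0}^{n} C(n,j)·p^j·q^{n−j}·W_{j+k} = W_{2n+k}, where C(n,j) is the binomial coefficient. -/
open Quaternion

lemma scalar18 (p q : ℝ) (w : ℕ → ℝ) (hw : ∀ n, w (n + 2) = p * w (n + 1) + q * w n)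
    (n : ℕ) : ∀ k, ∑ j ∈ Finset.range (n + 1),
      (n.choose j : ℝ) * p ^ j * q ^ (n - j) * w (j + k) = w (2 * n + k) := by
  induction n with
  | zero => intro k; simp
  | succ n ih =>
    intro k
    have hA : ∑ j ∈ Finset.range (n + 1 + 1),
        ((n + 1).choose j : ℝ) * p ^ j * q ^ (n + 1 - j) * w (j + k)
        = (∑ i ∈ Finset.range (n + 1),
            (n.choose (i + 1) : ℝ) * p ^ (i + 1) * q ^ (n - i) * w (i + 1 + k)
            + q ^ (n + 1) * w k)
          + p * ∑ i ∈ Finset.range (n + 1),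
            (n.choose i : ℝ) * p ^ i * q ^ (n - i) * w (i + (k + 1)) := by
      rw [Finset.sum_range_succ', Finset.mul_sum]
      have : ∀ i ∈ Finset.range (n + 1),
          ((n + 1).choose (i + 1) : ℝ) * p ^ (i + 1) * q ^ (n + 1 - (i + 1)) * w (i + 1 + k)
          = ((n.choose (i + 1) : ℝ) * p ^ (i + 1) * q ^ (n - i) * w (i + 1 + k))
            + p * ((n.choose i : ℝ) * p ^ i * q ^ (n - i) * w (i + (k + 1))) := by
        intro i hi
        rw [Nat.choose_succ_succ]
        push_cast
        have : i + 1 + k = i + (k + 1) := by ring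
        rw [this]
        simp only [Nat.succ_eq_add_one]
        ring
      rw [Finset.sum_congr rfl this, Finset.sum_add_distrib]
      simp
      ring
    have hB : ∑ i ∈ Finset.range (n + 1),
        (n.choose (i + 1) : ℝ) * p ^ (i + 1) * q ^ (n - i) * w (i + 1 + k)
        + q ^ (n + 1) * w k
        = q * ∑ j ∈ Finset.range (n + 1),
            (n.choose j : ℝ) * p ^ j * q ^ (n - j) * w (j + k) := by
      rw [Finset.mul_sum]
      conv_lhs => rw [Finset.sum_range_succ]
      conv_rhs => rw [Finset.sum_range_succ']
      simp only [Nat.choose_succ_self, Nat.cast_zero, zero_mul, add_zero]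
      congr 1
      · apply Finset.sum_congr rfl
        intro i hi
        simp only [Finset.mem_range] at hi
        have : n - i = n - (i + 1) + 1 := by omega
        rw [this]
        ring
      · simp
        ring
    rw [hA, hB, ih k, ih (k + 1)]
    have : 2 * (n + 1) + k = 2 * n + k + 2 := by ring
    rw [this, hw]
    have : 2 * n + (k + 1) = 2 * n + k + 1 := by ring
    rw [this]
    ring

theorem stmt18 (p q : ℝ) (w : ℕ → ℝ) (hw : ∀ n, w (n + 2) = p * w (n + 1) + q * w n)
    (W : ℕ → ℍ[ℝ]) (hW : ∀ n, W n = ⟨w n, w (n + 1), w (n + 2), w (n + 3)⟩)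
    (n k : ℕ) :
    ∑ j ∈ Finset.range (n + 1),
        ((n.choose j : ℝ) * p ^ j * q ^ (n - j)) • W (j + k) =
      W (2 * n + k) := by
  ext
  · erw [← QuaternionAlgebra.reₗ_apply (-1 : ℝ) (0 : ℝ) (-1 : ℝ), map_sum]
    simp only [map_smul, QuaternionAlgebra.reₗ_apply, hW, smul_eq_mul]
    exact scalar18 p q w hw n k
  · erw [← QuaternionAlgebra.imIₗ_apply (-1 : ℝ) (0 : ℝ) (-1 : ℝ), map_sum]
    simp only [map_smul, QuaternionAlgebra.imIₗ_apply, hW, smul_eq_mul]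
    have := scalar18 p q w hw n (k + 1)
    simp only [← add_assoc] at this ⊢
    exact this
  · erw [← QuaternionAlgebra.imJₗ_apply (-1 : ℝ) (0 : ℝ) (-1 : ℝ), map_sum]
    simp only [map_smul, QuaternionAlgebra.imJₗ_apply, hW, smul_eq_mul]
    have := scalar18 p q w hw n (k + 2)
    simp only [← add_assoc] at this ⊢
    exact this
  · erw [← QuaternionAlgebra.imKₗ_apply (-1 : ℝ) (0 : ℝ) (-1 : ℝ), map_sum]
    simp only [map_smul, QuaternionAlgebra.imKₗ_apply, hW, smul_eq_mul]
    have := scalar18 p q w hw n (k + 3)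
    simp only [← add_assoc] at this ⊢
    exact this
end

section
/- For all non-negative integers n and k: ∑_{j=0}^{n} C(n,j)·(−1)^j·q^{n−j}·W_{2j+k} = (−p)^n·W_{n+k}. -/
open Quaternion

theorem key19 (p q : ℝ) (w : ℕ → ℝ) (hw : ∀ n, w (n + 2) = p * w (n + 1) + q * w n) :
    ∀ n k, ∑ j ∈ Finset.range (n + 1),
        (n.choose j : ℝ) * (-1) ^ j * q ^ (n - j) * w (2 * j + k)
      = (-p) ^ n * w (n + k) := by
  intro n
  induction n with
  | zero => intro k; simp
  | succ n ih =>
    intro k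
    have hS1 : q * (∑ j ∈ Finset.range (n + 1),
          (n.choose j : ℝ) * (-1) ^ j * q ^ (n - j) * w (2 * j + k))
        = (∑ i ∈ Finset.range (n + 1),
            (n.choose (i + 1) : ℝ) * (-1) ^ (i + 1) * q ^ (n - i) * w (2 * (i + 1) + k))
          + q ^ (n + 1) * w (2 * 0 + k) := by
      rw [Finset.sum_range_succ'
        (fun j => (n.choose j : ℝ) * (-1) ^ j * q ^ (n - j) * w (2 * j + k)) n]
      rw [Finset.sum_range_succ
        (fun i => (n.choose (i + 1) : ℝ) * (-1) ^ (i + 1) * q ^ (n - i) * w (2 * (i + 1) + k)) n]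
      rw [mul_add, Finset.mul_sum]
      have hlast : ((n.choose (n + 1) : ℝ) * (-1) ^ (n + 1) * q ^ (n - n) * w (2 * (n + 1) + k))
          = 0 := by
        simp [Nat.choose_succ_self]
      rw [hlast, add_zero]
      congr 1
      · apply Finset.sum_congr rfl
        intro i hi
        have hi' : i < n := Finset.mem_range.mp hi
        have : n - i = (n - (i + 1)) + 1 := by omega
        rw [this, pow_succ]
        ring
      · simp only [Nat.choose_zero_right, Nat.cast_one, pow_zero, Nat.sub_zero]
        ring
    have e1 : ∑ j ∈ Finset.range (n + 1 + 1),
          ((n + 1).choose j : ℝ) * (-1) ^ j * q ^ (n + 1 - j) * w (2 * j + k)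
        = q * (∑ j ∈ Finset.range (n + 1),
            (n.choose j : ℝ) * (-1) ^ j * q ^ (n - j) * w (2 * j + k))
          - ∑ j ∈ Finset.range (n + 1),
            (n.choose j : ℝ) * (-1) ^ j * q ^ (n - j) * w (2 * j + (k + 2)) := by
      rw [Finset.sum_range_succ']
      have hsplit : ∀ i ∈ Finset.range (n + 1),
          ((n + 1).choose (i + 1) : ℝ) * (-1) ^ (i + 1) * q ^ (n + 1 - (i + 1))
              * w (2 * (i + 1) + k)
          = (n.choose (i + 1) : ℝ) * (-1) ^ (i + 1) * q ^ (n - i) * w (2 * (i + 1) + k)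
            + -((n.choose i : ℝ) * (-1) ^ i * q ^ (n - i) * w (2 * i + (k + 2))) := by
        intro i _
        have h1 : (n + 1).choose (i + 1) = n.choose i + n.choose (i + 1) :=
          Nat.choose_succ_succ n i
        have h2 : n + 1 - (i + 1) = n - i := by omega
        have h3 : 2 * (i + 1) + k = 2 * i + (k + 2) := by omega
        rw [h1, h2, h3]
        push_cast
        ring
      rw [Finset.sum_congr rfl hsplit, Finset.sum_add_distrib, Finset.sum_neg_distrib, hS1]
      simp only [Nat.choose_zero_right, Nat.cast_one, pow_zero, Nat.sub_zero, one_mul]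
      ring
    rw [e1, ih k, ih (k + 2)]
    have h2 : w (n + (k + 2)) = p * w (n + k + 1) + q * w (n + k) := by
      have := hw (n + k)
      have hnk : n + (k + 2) = n + k + 2 := by omega
      rw [hnk, this]
    have h3 : n + 1 + k = n + k + 1 := by omega
    rw [h2, h3, pow_succ]
    ring

theorem re_sum19 (s : Finset ℕ) (f : ℕ → ℍ[ℝ]) :
    (∑ j ∈ s, f j).re = ∑ j ∈ s, (f j).re := by
  induction s using Finset.cons_induction with
  | empty => rfl
  | cons x t hx ih => rw [Finset.sum_cons, Finset.sum_cons]; simp [ih]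

theorem imI_sum19 (s : Finset ℕ) (f : ℕ → ℍ[ℝ]) :
    (∑ j ∈ s, f j).imI = ∑ j ∈ s, (f j).imI := by
  induction s using Finset.cons_induction with
  | empty => rfl
  | cons x t hx ih => rw [Finset.sum_cons, Finset.sum_cons]; simp [ih]

theorem imJ_sum19 (s : Finset ℕ) (f : ℕ → ℍ[ℝ]) :
    (∑ j ∈ s, f j).imJ = ∑ j ∈ s, (f j).imJ := by
  induction s using Finset.cons_induction with
  | empty => rfl
  | cons x t hx ih => rw [Finset.sum_cons, Finset.sum_cons]; simp [ih]

theorem imK_sum19 (s : Finset ℕ) (f : ℕ → ℍ[ℝ]) :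
    (∑ j ∈ s, f j).imK = ∑ j ∈ s, (f j).imK := by
  induction s using Finset.cons_induction with
  | empty => rfl
  | cons x t hx ih => rw [Finset.sum_cons, Finset.sum_cons]; simp [ih]

theorem stmt19 (p q : ℝ) (w : ℕ → ℝ) (hw : ∀ n, w (n + 2) = p * w (n + 1) + q * w n)
    (W : ℕ → ℍ[ℝ]) (hW : ∀ n, W n = ⟨w n, w (n + 1), w (n + 2), w (n + 3)⟩)
    (n k : ℕ) :
    ∑ j ∈ Finset.range (n + 1),
        ((n.choose j : ℝ) * (-1) ^ j * q ^ (n - j)) • W (2 * j + k) =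
      ((-p) ^ n) • W (n + k) := by
  have h1 := key19 p q w hw n k
  have h2 : ∑ j ∈ Finset.range (n + 1),
      (n.choose j : ℝ) * (-1) ^ j * q ^ (n - j) * w (2 * j + k + 1)
      = (-p) ^ n * w (n + k + 1) := by
    simpa [← add_assoc] using key19 p q w hw n (k + 1)
  have h3 : ∑ j ∈ Finset.range (n + 1),
      (n.choose j : ℝ) * (-1) ^ j * q ^ (n - j) * w (2 * j + k + 2)
      = (-p) ^ n * w (n + k + 2) := by
    simpa [← add_assoc] using key19 p q w hw n (k + 2)
  have h4 : ∑ j ∈ Finset.range (n + 1),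
      (n.choose j : ℝ) * (-1) ^ j * q ^ (n - j) * w (2 * j + k + 3)
      = (-p) ^ n * w (n + k + 3) := by
    simpa [← add_assoc] using key19 p q w hw n (k + 3)
  refine QuaternionAlgebra.ext ?_ ?_ ?_ ?_
  · rw [re_sum19]
    simp only [hW, Quaternion.re_smul, smul_eq_mul]
    exact h1
  · rw [imI_sum19]
    simp only [hW, Quaternion.imI_smul, smul_eq_mul]
    exact h2
  · rw [imJ_sum19]
    simp only [hW, Quaternion.imJ_smul, smul_eq_mul]
    exact h3
  · rw [imK_sum19]
    simp only [hW, Quaternion.imK_smul, smul_eq_mul]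
    exact h4
end
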